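/- (Lemma 2) Let T be a finite tree with a designated root, g_e > 0 strictly positive conductances on its edges, K = K_{1/g} the path-sum matrix with weights 1/g_e, and Σ_p any symmetric matrix indexed by the non-root vertices. Set Σ_ε = K Σ_p K. Then for any non-root vertex a whose parent b is also non-root: Σ_ε(a,a) - Σ_ε(a,b) - Σ_ε(b,a) + Σ_ε(b,b) = (1/g_{ab}^2) · Σ_{c,d ∈ D_a} Σ_p(c,d), where the sum runs over all ordered pairs (c,d) of descendants of a. -/
import Mathlib


open Classical

/-- A finite tree with a designated root vertex (the slack bus). -/
structure GridTree (V : Type*) [Fintype V] [DecidableEq V] where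
  graph : SimpleGraph V
  root : V
  isTree : graph.IsTree

namespace GridTree

variable {V : Type*} [Fintype V] [DecidableEq V] (T : GridTree V)

/-- The unique path (as a walk) from a vertex to the root. -/
noncomputable def pathToRoot (a : V) : T.graph.Walk a T.root :=
  (T.isTree.existsUnique_path a T.root).choose

/-- `E_a`: the set of edges on the unique path from `a` to the root. -/
noncomputable def pathEdges (a : V) : Finset (Sym2 V) :=
  (T.pathToRoot a).edges.toFinset

/-- `c` is a descendant of `a`: `a` lies on the unique path from `c` to the root
(in particular every vertex is a descendant of itself). -/
def Descendant (c a : V) : Prop := a ∈ (T.pathToRoot c).support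

/-- `b` is the parent of `a`: the edge `{a, b}` lies on the path from `a` to the root
(equivalently, `b` is the unique neighbor of `a` on that path). -/
noncomputable def IsParent (a b : V) : Prop := s(a, b) ∈ T.pathEdges a

/-- The path-sum matrix `K_w`, indexed by the non-root vertices:
`K_w(a,b) = ∑_{e ∈ E_a ∩ E_b} w_e`. -/
noncomputable def pathMatrix (w : Sym2 V → ℝ) :
    Matrix {v : V // v ≠ T.root} {v : V // v ≠ T.root} ℝ :=
  fun a b => ∑ e ∈ T.pathEdges a.1 ∩ T.pathEdges b.1, w e

/-- The reduced weighted graph Laplacian with edge weights `w`, indexed by the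
non-root vertices (the row and column of the root are deleted). -/
noncomputable def lap (w : Sym2 V → ℝ) :
    Matrix {v : V // v ≠ T.root} {v : V // v ≠ T.root} ℝ :=
  fun a b =>
    if a = b then ∑ c ∈ Finset.univ.filter (fun c => T.graph.Adj a.1 c), w s(a.1, c)
    else if T.graph.Adj a.1 b.1 then - w s(a.1, b.1) else 0

lemma pathToRoot_isPath (a : V) : (T.pathToRoot a).IsPath :=
  (T.isTree.existsUnique_path a T.root).choose_spec.1

lemma path_unique {a : V} (p : T.graph.Walk a T.root) (hp : p.IsPath) :
    p = T.pathToRoot a :=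
  (T.isTree.existsUnique_path a T.root).choose_spec.2 p hp

lemma parent_structure {a b : V} (ha : a ≠ T.root) (hab : T.IsParent a b) :
    T.pathEdges a = insert s(a, b) (T.pathEdges b) ∧ s(a, b) ∉ T.pathEdges b := by
  have hp : (T.pathToRoot a).IsPath := T.pathToRoot_isPath a
  have hnn : ¬ (T.pathToRoot a).Nil := SimpleGraph.Walk.not_nil_of_ne ha
  obtain ⟨x, hadj, q, hpq⟩ := SimpleGraph.Walk.not_nil_iff.mp hnn
  have hab' : s(a, b) ∈ (T.pathToRoot a).edges := by
    simpa [IsParent, pathEdges] using hab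
  rw [hpq] at hp hab'
  rw [SimpleGraph.Walk.edges_cons, List.mem_cons] at hab'
  rw [SimpleGraph.Walk.cons_isPath_iff] at hp
  rcases hab' with he | he
  · have hbx : b = x := Sym2.congr_right.mp he
    subst hbx
    have hq : q = T.pathToRoot b := T.path_unique q hp.1
    have hnot : s(a, b) ∉ T.pathEdges b := by
      intro hmem
      apply hp.2
      rw [hq]
      exact SimpleGraph.Walk.fst_mem_support_of_mem_edges _
        (by simpa [pathEdges] using hmem)
    refine ⟨?_, hnot⟩
    simp [pathEdges, hpq, hq]
  · exact absurd (SimpleGraph.Walk.fst_mem_support_of_mem_edges q he) hp.2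

lemma descendant_iff {a b : V} (ha : a ≠ T.root) (hab : T.IsParent a b) (c : V) :
    T.Descendant c a ↔ s(a, b) ∈ T.pathEdges c := by
  constructor
  · intro hsup
    have hq : ((T.pathToRoot c).dropUntil a hsup) = T.pathToRoot a :=
      T.path_unique _ ((T.pathToRoot_isPath c).dropUntil hsup)
    have hab' : s(a, b) ∈ ((T.pathToRoot c).dropUntil a hsup).edges := by
      rw [hq]; simpa [IsParent, pathEdges] using hab
    have := SimpleGraph.Walk.edges_dropUntil_subset _ hsup hab'
    simpa [pathEdges] using this
  · intro hmem
    exact SimpleGraph.Walk.fst_mem_support_of_mem_edges _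
      (by simpa [pathEdges] using hmem)

lemma pathMatrix_key (w : Sym2 V → ℝ) {a b : {v : V // v ≠ T.root}}
    (hab : T.IsParent a.1 b.1) (c : {v : V // v ≠ T.root}) :
    T.pathMatrix w a c - T.pathMatrix w b c =
      if T.Descendant c.1 a.1 then w s(a.1, b.1) else 0 := by
  obtain ⟨hEa, hnot⟩ := T.parent_structure a.2 hab
  simp only [pathMatrix, hEa]
  by_cases hd : T.Descendant c.1 a.1
  · rw [if_pos hd]
    have hmem : s(a.1, b.1) ∈ T.pathEdges c.1 := (T.descendant_iff a.2 hab c.1).mp hd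
    rw [Finset.insert_inter_of_mem hmem,
      Finset.sum_insert (fun hc => hnot (Finset.mem_of_mem_inter_left hc))]
    ring
  · rw [if_neg hd]
    have hmem : s(a.1, b.1) ∉ T.pathEdges c.1 := fun h => hd ((T.descendant_iff a.2 hab c.1).mpr h)
    rw [Finset.insert_inter_of_notMem hmem]
    ring

lemma pathMatrix_symm (w : Sym2 V → ℝ) (x y : {v : V // v ≠ T.root}) :
    T.pathMatrix w x y = T.pathMatrix w y x := by
  simp only [pathMatrix]
  rw [Finset.inter_comm]

end GridTree

/-- **Lemma 2.** In the DC-resistive model `Σ_ε = K Σ_p K` with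
`K = K_{1/g}` and `Σ_p` symmetric, for a non-root vertex `a` with non-root parent `b`:
`Σ_ε(a,a) - Σ_ε(a,b) - Σ_ε(b,a) + Σ_ε(b,b) = (1/g_{ab}²) ∑_{c,d ∈ D_a} Σ_p(c,d)`,
the sum running over all ordered pairs of descendants of `a`. -/
theorem dc_expected_squared_difference
    {V : Type*} [Fintype V] [DecidableEq V] (T : GridTree V)
    (g : Sym2 V → ℝ) (hg : ∀ e ∈ T.graph.edgeSet, 0 < g e)
    (Sp : Matrix {v : V // v ≠ T.root} {v : V // v ≠ T.root} ℝ) (hsym : Sp.IsSymm)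
    (a b : {v : V // v ≠ T.root}) (hab : T.IsParent a.1 b.1) :
    (T.pathMatrix (fun e => (g e)⁻¹) * Sp * T.pathMatrix (fun e => (g e)⁻¹)) a a -
      (T.pathMatrix (fun e => (g e)⁻¹) * Sp * T.pathMatrix (fun e => (g e)⁻¹)) a b -
      (T.pathMatrix (fun e => (g e)⁻¹) * Sp * T.pathMatrix (fun e => (g e)⁻¹)) b a +
      (T.pathMatrix (fun e => (g e)⁻¹) * Sp * T.pathMatrix (fun e => (g e)⁻¹)) b b =
    (1 / (g s(a.1, b.1)) ^ 2) *
      ∑ c ∈ Finset.univ.filter (fun c : {v : V // v ≠ T.root} => T.Descendant c.1 a.1),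
        ∑ d ∈ Finset.univ.filter (fun d : {v : V // v ≠ T.root} => T.Descendant d.1 a.1),
          Sp c d := by
  set w : Sym2 V → ℝ := fun e => (g e)⁻¹ with hw
  set K := T.pathMatrix w with hK
  have hgne : g s(a.1, b.1) ≠ 0 := by
    refine ne_of_gt (hg _ ?_)
    have : s(a.1, b.1) ∈ (T.pathToRoot a.1).edges := by
      simpa [GridTree.IsParent, GridTree.pathEdges] using hab
    exact SimpleGraph.Walk.edges_subset_edgeSet _ this
  have expand : ∀ x y : {v : V // v ≠ T.root},
      (K * Sp * K) x y = ∑ c, ∑ d, K x c * Sp c d * K d y := by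
    intro x y
    simp only [Matrix.mul_apply, Finset.sum_mul]
    rw [Finset.sum_comm]
  have key : ∀ c : {v : V // v ≠ T.root}, K a c - K b c =
      if T.Descendant c.1 a.1 then w s(a.1, b.1) else 0 :=
    fun c => T.pathMatrix_key w hab c
  calc (K * Sp * K) a a - (K * Sp * K) a b - (K * Sp * K) b a + (K * Sp * K) b b
      = ∑ c, ∑ d, (K a c - K b c) * Sp c d * (K a d - K b d) := by
        rw [expand a a, expand a b, expand b a, expand b b,
          ← Finset.sum_sub_distrib, ← Finset.sum_sub_distrib, ← Finset.sum_add_distrib]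
        refine Finset.sum_congr rfl fun c _ => ?_
        rw [← Finset.sum_sub_distrib, ← Finset.sum_sub_distrib, ← Finset.sum_add_distrib]
        refine Finset.sum_congr rfl fun d _ => ?_
        have hsymK : ∀ x y, K x y = K y x := T.pathMatrix_symm w
        rw [hsymK d a, hsymK d b]
        ring
    _ = ∑ c, ∑ d, (if T.Descendant c.1 a.1 then w s(a.1, b.1) else 0) * Sp c d *
          (if T.Descendant d.1 a.1 then w s(a.1, b.1) else 0) := by
        simp only [key]
    _ = ∑ c : {v : V // v ≠ T.root}, (if T.Descendant c.1 a.1 then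
          (1 / (g s(a.1, b.1)) ^ 2) *
            ∑ d ∈ Finset.univ.filter
              (fun d : {v : V // v ≠ T.root} => T.Descendant d.1 a.1), Sp c d
          else 0) := by
        refine Finset.sum_congr rfl fun c _ => ?_
        by_cases hc : T.Descendant c.1 a.1
        · simp only [hc, if_true, Finset.sum_filter, Finset.mul_sum]
          refine Finset.sum_congr rfl fun d _ => ?_
          by_cases hd : T.Descendant d.1 a.1
          · simp only [hd, if_true, hw]
            rw [one_div, ← inv_pow, sq]
            ring
          · simp [hd]
        · simp [hc]
    _ = (1 / (g s(a.1, b.1)) ^ 2) *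
          ∑ c ∈ Finset.univ.filter (fun c : {v : V // v ≠ T.root} => T.Descendant c.1 a.1),
            ∑ d ∈ Finset.univ.filter (fun d : {v : V // v ≠ T.root} => T.Descendant d.1 a.1),
              Sp c d := by
        rw [← Finset.sum_filter, Finset.mul_sum]
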